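/- For every natural number n ≥ 6, the number of distinct families of ⌊n/2⌋-cliques realizable by simple graphs on Fin n is strictly less than 2^(C(n,⌊n/2⌋)); that is, the image of the map sending a simple graph G on Fin n to the set of all ⌊n/2⌋-element vertex subsets that are cliques in G has cardinality strictly less than 2^(C(n,⌊n/2⌋)). -/

import Mathlib

/-!
The clique family is a function of the graph, so there are at most as many families as graphs
on `n` vertices, namely `2 ^ C(n, 2)`. For `n ≥ 6` we have `C(n, 2) < C(n, 3) ≤ C(n, ⌊n/2⌋)`.
-/

namespace SimpleGraph

variable {V : Type*}

lemma injective_preimage_edgeSet :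
    Function.Injective fun G : SimpleGraph V =>
      ((↑) : {e : Sym2 V // ¬ e.IsDiag} → Sym2 V) ⁻¹' G.edgeSet := by
  intro G H h
  refine edgeSet_injective (Set.ext fun e => ?_)
  by_cases he : e.IsDiag
  · exact iff_of_false (fun h' => G.not_isDiag_of_mem_edgeSet h' he)
      (fun h' => H.not_isDiag_of_mem_edgeSet h' he)
  · exact Set.ext_iff.mp h ⟨e, he⟩

lemma card_le_two_pow_choose_two [Fintype V] :
    Nat.card (SimpleGraph V) ≤ 2 ^ (Fintype.card V).choose 2 := by
  classical
  calc Nat.card (SimpleGraph V) ≤ Nat.card (Set {e : Sym2 V // ¬ e.IsDiag}) :=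
        Nat.card_le_card_of_injective _ injective_preimage_edgeSet
    _ = 2 ^ (Fintype.card V).choose 2 := by
        rw [Nat.card_eq_fintype_card, Fintype.card_set, Sym2.card_subtype_not_diag]

end SimpleGraph

lemma Nat.choose_two_lt_choose_three {n : ℕ} (hn : 6 ≤ n) : n.choose 2 < n.choose 3 := by
  have h : n.choose 3 * 3 = n.choose 2 * (n - 2) := Nat.choose_succ_right_eq n 2
  have hpos : 0 < n.choose 2 := Nat.choose_pos (by omega)
  have hn2 : 4 ≤ n - 2 := by omega
  nlinarith

lemma Nat.choose_two_lt_choose_div_two {n : ℕ} (hn : 6 ≤ n) : n.choose 2 < n.choose (n / 2) :=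
  (Nat.choose_two_lt_choose_three hn).trans_le (Nat.choose_le_middle 3 n)

/-- For `n ≥ 6`, the number of distinct families of `⌊n/2⌋`-cliques realizable
by simple graphs on `Fin n` is strictly less than `2 ^ C(n, ⌊n/2⌋)`. -/
theorem card_half_clique_families_lt (n : ℕ) (hn : 6 ≤ n) :
    ((fun G : SimpleGraph (Fin n) =>
        {S : Finset (Fin n) | G.IsNClique (n / 2) S}) '' Set.univ).ncard <
      2 ^ n.choose (n / 2) :=
  calc _ ≤ (Set.univ : Set (SimpleGraph (Fin n))).ncard := Set.ncard_image_le
    _ = Nat.card (SimpleGraph (Fin n)) := Set.ncard_univ _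
    _ ≤ 2 ^ n.choose 2 := by simpa using SimpleGraph.card_le_two_pow_choose_two (V := Fin n)
    _ < 2 ^ n.choose (n / 2) :=
        Nat.pow_lt_pow_right (by norm_num) (Nat.choose_two_lt_choose_div_two hn)
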